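/- arXiv:2210.07893 — 4 statements merged into one kernel-verified Lean document; each statement's English description precedes it below -/
import Mathlib

section
/- Let d ≥ 1 be an integer, δ > 0, and let ψ : [0,∞) → [0,∞) be a nonincreasing function with ∑_{m=1}^∞ m^{d−1} ψ(mδ) < ∞. Let k : ℝ^d × ℝ^d → ℝ be a symmetric function satisfying |k(x,x')| ≤ ψ(‖x − x'‖) for all x, x' ∈ ℝ^d. Then for every N and every δ-separated family x₁,…,x_N in ℝ^d, every eigenvalue of the symmetric N×N matrix K with entries K_{ij} = k(x_i, x_j) is at most ψ(0) + 10^d ∑_{m=1}^∞ m^{d−1} ψ(mδ). In particular, the largest eigenvalue of K is bounded by a constant depending only on k, δ and d, independently of N. -/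
/-!
Gershgorin's theorem bounds every eigenvalue by a row sum `K i i + ∑_{j ≠ i} |K i j|`.
Sort the points `x j` with `j ≠ i` into the spherical shells `(m+1)δ ≤ ‖x i - x j‖ < (m+2)δ`
around `x i`. The balls of radius `δ/2` about the points of one shell are pairwise disjoint and
lie in the annulus of radii `(m + 1/2)δ` and `(m + 5/2)δ`, so comparing volumes shows that a
shell holds at most `(2m+5)^d - (2m+1)^d ≤ 10^d (m+1)^{d-1}` points, and each of them
contributes at most `ψ((m+1)δ)` to the row sum.
-/

open MeasureTheory Measure Metric Finset Module

theorem mul_four_mul_five_pow_pred_le_ten_pow (n : ℕ) : n * 4 * 5 ^ (n - 1) ≤ 10 ^ n := by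
  rcases n with _ | m
  · simp
  have hm : m + 1 ≤ 2 ^ m := Nat.lt_two_pow_self
  calc (m + 1) * 4 * 5 ^ m ≤ 2 ^ m * 10 * 5 ^ m := by gcongr; omega
    _ = 10 ^ (m + 1) := by rw [pow_succ, show (10 : ℕ) = 2 * 5 by rfl, mul_pow]; ring

theorem pow_sub_pow_le_ten_pow_mul (n : ℕ) {t : ℝ} (ht : 1 ≤ t) :
    (2 * t + 3) ^ n - (2 * t - 1) ^ n ≤ 10 ^ n * t ^ (n - 1) := calc
  _ ≤ |(2 * t + 3) - (2 * t - 1)| * n * max |2 * t + 3| |2 * t - 1| ^ (n - 1) :=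
    (le_abs_self _).trans (abs_pow_sub_pow_le ..)
  _ = 4 * n * (2 * t + 3) ^ (n - 1) := by
    rw [abs_of_nonneg (by linarith : (0 : ℝ) ≤ 2 * t + 3),
      abs_of_nonneg (by linarith : (0 : ℝ) ≤ 2 * t - 1), max_eq_left (by linarith)]
    norm_num
  _ ≤ 4 * n * (5 * t) ^ (n - 1) := by gcongr; linarith
  _ = ((n * 4 * 5 ^ (n - 1) : ℕ) : ℝ) * t ^ (n - 1) := by push_cast; ring
  _ ≤ 10 ^ n * t ^ (n - 1) := by
    gcongr
    exact_mod_cast mul_four_mul_five_pow_pred_le_ten_pow n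

section Packing

variable {E : Type*} [NormedAddCommGroup E] [NormedSpace ℝ E] [FiniteDimensional ℝ E]

theorem card_mul_pow_le_of_separated_of_mem_annulus {ι : Type*} {s : Finset ι} {y : ι → E}
    {c : E} {δ r R : ℝ} (hδ : 0 < δ) (hr : δ / 2 ≤ r) (hrR : r ≤ R)
    (hsep : (s : Set ι).Pairwise fun i j => δ ≤ dist (y i) (y j))
    (hmem : ∀ i ∈ s, dist c (y i) ∈ Set.Icc r R) :
    #s * (δ / 2) ^ finrank ℝ E ≤ (R + δ / 2) ^ finrank ℝ E - (r - δ / 2) ^ finrank ℝ E := by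
  let : MeasurableSpace E := borel E
  have : BorelSpace E := ⟨rfl⟩
  set μ : Measure E := Measure.addHaar
  set n := finrank ℝ E
  have hball_sub : ∀ i ∈ s,
      ball (y i) (δ / 2) ⊆ closedBall c (R + δ / 2) \ closedBall c (r - δ / 2) := by
    intro i hi z hz
    rw [mem_ball] at hz
    have hdist := hmem i hi
    refine ⟨mem_closedBall.2 ?_, fun h => ?_⟩
    · linarith [dist_triangle z (y i) c, dist_comm c (y i), hdist.2]
    · linarith [mem_closedBall.1 h, dist_triangle c z (y i), dist_comm z c, hdist.1]
  have hdisj : (s : Set ι).PairwiseDisjoint fun i => ball (y i) (δ / 2) :=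
    fun i hi j hj hij => ball_disjoint_ball (by linarith [hsep hi hj hij])
  have hsmall : ∀ i, μ.real (ball (y i) (δ / 2)) = (δ / 2) ^ n * μ.real (ball 0 1) := by
    intro i
    rw [measureReal_def, addHaar_ball_of_pos μ _ (half_pos hδ), ENNReal.toReal_mul,
      ENNReal.toReal_ofReal (by positivity), measureReal_def]
  have hvol : #s * ((δ / 2) ^ n * μ.real (ball 0 1)) ≤
      ((R + δ / 2) ^ n - (r - δ / 2) ^ n) * μ.real (ball 0 1) := calc
    _ = μ.real (⋃ i ∈ s, ball (y i) (δ / 2)) := by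
      rw [measureReal_biUnion_finset hdisj (fun _ _ => measurableSet_ball)]
      simp [hsmall]
    _ ≤ μ.real (closedBall c (R + δ / 2) \ closedBall c (r - δ / 2)) :=
      measureReal_mono (Set.iUnion₂_subset hball_sub)
        (measure_mono Set.sdiff_subset |>.trans_lt measure_closedBall_lt_top).ne
    _ = _ := by
      rw [measureReal_sdiff (closedBall_subset_closedBall (by linarith)) measurableSet_closedBall
        measure_closedBall_lt_top.ne,
        addHaar_real_closedBall μ _ (by linarith), addHaar_real_closedBall μ _ (by linarith),
        sub_mul]
  rw [← mul_assoc] at hvol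
  exact le_of_mul_le_mul_right hvol
    (ENNReal.toReal_pos (measure_ball_pos μ 0 one_pos).ne' measure_ball_lt_top.ne)

theorem card_le_of_separated_of_mem_shell {ι : Type*} {s : Finset ι} {y : ι → E}
    {c : E} {δ t : ℝ} (hδ : 0 < δ) (ht : 1 ≤ t)
    (hsep : (s : Set ι).Pairwise fun i j => δ ≤ dist (y i) (y j))
    (hmem : ∀ i ∈ s, dist c (y i) ∈ Set.Icc (t * δ) ((t + 1) * δ)) :
    #s ≤ 10 ^ finrank ℝ E * t ^ (finrank ℝ E - 1) := by
  have hpack := card_mul_pow_le_of_separated_of_mem_annulus hδ (by nlinarith) (by nlinarith)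
    hsep hmem
  rw [show (t + 1) * δ + δ / 2 = (2 * t + 3) * (δ / 2) by ring,
    show t * δ - δ / 2 = (2 * t - 1) * (δ / 2) by ring, mul_pow, mul_pow, ← sub_mul] at hpack
  exact (le_of_mul_le_mul_right hpack (by positivity)).trans (pow_sub_pow_le_ten_pow_mul _ ht)

theorem sum_le_ten_pow_mul_tsum_of_separated {ψ : ℝ → ℝ} {δ : ℝ} (hδ : 0 < δ)
    (hψ_nonneg : ∀ t, 0 ≤ ψ t) (hψ_mono : AntitoneOn ψ (Set.Ici 0))
    (hψ_sum : Summable fun m : ℕ => ((m : ℝ) + 1) ^ (finrank ℝ E - 1) * ψ (((m : ℝ) + 1) * δ))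
    {ι : Type*} {s : Finset ι} {y : ι → E} {c : E}
    (hsep : (s : Set ι).Pairwise fun i j => δ ≤ dist (y i) (y j))
    (hfar : ∀ i ∈ s, δ ≤ dist c (y i)) :
    ∑ i ∈ s, ψ (dist c (y i)) ≤
      10 ^ finrank ℝ E * ∑' m : ℕ, ((m : ℝ) + 1) ^ (finrank ℝ E - 1) * ψ (((m : ℝ) + 1) * δ) := by
  classical
  set n := finrank ℝ E
  let shell : ι → ℕ := fun i => ⌊dist c (y i) / δ⌋₊ - 1
  have hshell : ∀ i ∈ s,
      dist c (y i) ∈ Set.Icc (((shell i : ℝ) + 1) * δ) (((shell i : ℝ) + 1 + 1) * δ) := by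
    intro i hi
    have hfloor : 1 ≤ ⌊dist c (y i) / δ⌋₊ :=
      Nat.le_floor (by rw [Nat.cast_one, le_div_iff₀ hδ, one_mul]; exact hfar i hi)
    have hcast : (shell i : ℝ) + 1 = ⌊dist c (y i) / δ⌋₊ := by
      rw [Nat.cast_sub hfloor]; ring
    rw [hcast]
    exact ⟨(le_div_iff₀ hδ).1 (Nat.floor_le (by positivity)),
      (div_le_iff₀ hδ).1 (Nat.lt_floor_add_one _).le⟩
  calc ∑ i ∈ s, ψ (dist c (y i)) ≤ ∑ i ∈ s, ψ (((shell i : ℝ) + 1) * δ) :=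
        sum_le_sum fun i hi =>
          hψ_mono (Set.mem_Ici.2 (by positivity)) (Set.mem_Ici.2 dist_nonneg) (hshell i hi).1
    _ = ∑ m ∈ s.image shell, #{i ∈ s | shell i = m} • ψ (((m : ℝ) + 1) * δ) :=
        sum_comp (fun m : ℕ => ψ (((m : ℝ) + 1) * δ)) shell
    _ ≤ ∑ m ∈ s.image shell, 10 ^ n * (((m : ℝ) + 1) ^ (n - 1) * ψ (((m : ℝ) + 1) * δ)) := by
        refine sum_le_sum fun m _ => ?_
        rw [nsmul_eq_mul, ← mul_assoc]
        refine mul_le_mul_of_nonneg_right ?_ (hψ_nonneg _)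
        refine card_le_of_separated_of_mem_shell (c := c) hδ (le_add_of_nonneg_left m.cast_nonneg)
          (hsep.mono (coe_subset.2 (filter_subset _ _))) fun i hi => ?_
        obtain ⟨his, rfl⟩ := mem_filter.1 hi
        exact hshell i his
    _ = 10 ^ n * ∑ m ∈ s.image shell, ((m : ℝ) + 1) ^ (n - 1) * ψ (((m : ℝ) + 1) * δ) :=
        (mul_sum ..).symm
    _ ≤ _ := by
        gcongr
        exact hψ_sum.sum_le_tsum _ fun m _ => mul_nonneg (by positivity) (hψ_nonneg _)

end Packing

theorem Matrix.IsHermitian.eigenvalues_le_of_row_bound {n : Type*} [Fintype n] [DecidableEq n]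
    {A : Matrix n n ℝ} (hA : A.IsHermitian) {B : ℝ}
    (hB : ∀ k, A k k + ∑ j ∈ univ.erase k, |A k j| ≤ B) (i : n) : hA.eigenvalues i ≤ B := by
  have hμ : Module.End.HasEigenvalue A.toLin' (hA.eigenvalues i) :=
    .of_mem_spectrum (by rw [Matrix.spectrum_toLin']; exact hA.eigenvalues_mem_spectrum_real i)
  obtain ⟨k, hk⟩ := eigenvalue_mem_ball hμ
  rw [mem_closedBall, Real.dist_eq] at hk
  simp only [Real.norm_eq_abs] at hk
  linarith [le_abs_self (hA.eigenvalues i - A k k), hB k, hk]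

theorem eigenvalue_upper_bound_of_separated_general
    (d : ℕ) (δ : ℝ) (hδ : 0 < δ)
    (ψ : ℝ → ℝ) (hψ_nonneg : ∀ t, 0 ≤ ψ t) (hψ_mono : AntitoneOn ψ (Set.Ici 0))
    (hψ_sum : Summable fun m : ℕ => ((m : ℝ) + 1) ^ (d - 1) * ψ (((m : ℝ) + 1) * δ))
    (k : EuclideanSpace ℝ (Fin d) → EuclideanSpace ℝ (Fin d) → ℝ)
    (hk_decay : ∀ x y, |k x y| ≤ ψ ‖x - y‖)
    (N : ℕ) (x : Fin N → EuclideanSpace ℝ (Fin d))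
    (hsep : ∀ i j, i ≠ j → δ ≤ ‖x i - x j‖)
    (K : Matrix (Fin N) (Fin N) ℝ)
    (hKdef : K = Matrix.of fun i j => k (x i) (x j))
    (hK : K.IsHermitian) :
    ∀ i, hK.eigenvalues i ≤
      ψ 0 + 10 ^ d * ∑' m : ℕ, ((m : ℝ) + 1) ^ (d - 1) * ψ (((m : ℝ) + 1) * δ) := by
  refine hK.eigenvalues_le_of_row_bound fun i => ?_
  have hdiag : K i i ≤ ψ 0 := by
    simpa [hKdef] using (le_abs_self _).trans (hk_decay (x i) (x i))
  have hoff := sum_le_ten_pow_mul_tsum_of_separated hδ hψ_nonneg hψ_mono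
    (by rwa [finrank_euclideanSpace_fin]) (s := univ.erase i) (c := x i)
    (fun a _ b _ hab => by simpa [dist_eq_norm] using hsep a b hab)
    (fun j hj => by simpa [dist_eq_norm] using hsep i j (ne_of_mem_erase hj).symm)
  rw [finrank_euclideanSpace_fin] at hoff
  have hentry : ∀ j, |K i j| ≤ ψ (dist (x i) (x j)) := fun j => by
    simpa [hKdef, dist_eq_norm] using hk_decay (x i) (x j)
  linarith [sum_le_sum fun j (_ : j ∈ univ.erase i) => hentry j]

/-- For a symmetric kernel `k` on `ℝ^d` dominated by a nonincreasing
envelope `ψ` with `∑ m^{d-1} ψ(mδ) < ∞`, every eigenvalue of the kernel matrix of any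
`δ`-separated family of points is at most `ψ(0) + 10^d ∑_{m≥1} m^{d-1} ψ(mδ)`,
independently of the number of points `N`. -/
theorem eigenvalue_upper_bound_of_separated
    (d : ℕ) (hd : 1 ≤ d) (δ : ℝ) (hδ : 0 < δ)
    (ψ : ℝ → ℝ) (hψ_nonneg : ∀ t, 0 ≤ ψ t) (hψ_mono : AntitoneOn ψ (Set.Ici 0))
    (hψ_sum : Summable fun m : ℕ => ((m : ℝ) + 1) ^ (d - 1) * ψ (((m : ℝ) + 1) * δ))
    (k : EuclideanSpace ℝ (Fin d) → EuclideanSpace ℝ (Fin d) → ℝ)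
    (hk_symm : ∀ x y, k x y = k y x)
    (hk_decay : ∀ x y, |k x y| ≤ ψ ‖x - y‖)
    (N : ℕ) (x : Fin N → EuclideanSpace ℝ (Fin d))
    (hsep : ∀ i j, i ≠ j → δ ≤ ‖x i - x j‖)
    (K : Matrix (Fin N) (Fin N) ℝ)
    (hKdef : K = Matrix.of fun i j => k (x i) (x j))
    (hK : K.IsHermitian) :
    ∀ i, hK.eigenvalues i ≤
      ψ 0 + 10 ^ d * ∑' m : ℕ, ((m : ℝ) + 1) ^ (d - 1) * ψ (((m : ℝ) + 1) * δ) :=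
  eigenvalue_upper_bound_of_separated_general d δ hδ ψ hψ_nonneg hψ_mono hψ_sum k hk_decay N x hsep
    K hKdef hK
end

section
/- Let d ≥ 1 be an integer, δ > 0, and let ψ : [0,∞) → [0,∞) be a nonincreasing function. Let x₁,…,x_N be a δ-separated family of points in ℝ^d. Then for every index i, ∑_{j=1}^N ψ(‖x_i − x_j‖) ≤ ψ(0) + 10^d ∑_{m=1}^∞ m^{d−1} ψ(mδ) (where the right-hand side may be +∞). -/
/-!
Group the points `x j`, `j ≠ i`, into shells `(m + 1) δ ≤ ‖x i - x j‖ < (m + 2) δ`. The balls of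
radius `δ / 2` around the points of shell `m` are pairwise disjoint and fill part of the annulus
around `x i` with radii `(2m + 1) δ / 2` and `(2m + 5) δ / 2`, so comparing volumes bounds the
number of these points by `(2m + 5)^d - (2m + 1)^d ≤ 10^d (m + 1)^(d - 1)`. On shell `m` the
nonincreasing `ψ` is at most `ψ((m + 1) δ)`.
-/

open scoped ENNReal
open MeasureTheory Metric Finset Module

theorem four_mul_mul_five_pow_le_ten_pow (d : ℕ) : 4 * d * 5 ^ (d - 1) ≤ 10 ^ d := by
  rcases d with _ | e
  · simp
  · have h2 : e + 1 ≤ 2 ^ e := Nat.lt_two_pow_self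
    rw [Nat.add_sub_cancel, pow_succ, show 10 = 2 * 5 by rfl, mul_pow]
    nlinarith [pow_pos (show 0 < 5 by norm_num) e]

theorem two_mul_add_five_pow_le (m d : ℕ) :
    (2 * m + 5) ^ d ≤ (2 * m + 1) ^ d + 10 ^ d * (m + 1) ^ (d - 1) := by
  have hdiff : (2 * m + 5 : ℤ) ^ d - (2 * m + 1) ^ d ≤ 4 * d * (2 * m + 5) ^ (d - 1) := by
    have h := abs_pow_sub_pow_le (2 * m + 5 : ℤ) (2 * m + 1) d
    have ha : |(2 * m + 5 : ℤ)| = 2 * m + 5 := abs_of_pos (by positivity)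
    have hb : |(2 * m + 1 : ℤ)| = 2 * m + 1 := abs_of_pos (by positivity)
    rw [show (2 * m + 5 : ℤ) - (2 * m + 1) = 4 by ring, ha, hb, max_eq_left (by omega)] at h
    exact (le_abs_self _).trans h
  have hbase : (2 * m + 5) ^ (d - 1) ≤ 5 ^ (d - 1) * (m + 1) ^ (d - 1) := by
    rw [← mul_pow]; gcongr; omega
  have hstep : (2 * m + 5) ^ d ≤ (2 * m + 1) ^ d + 4 * d * (2 * m + 5) ^ (d - 1) := by
    zify; linarith
  calc (2 * m + 5) ^ d ≤ (2 * m + 1) ^ d + 4 * d * (5 ^ (d - 1) * (m + 1) ^ (d - 1)) := by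
        grw [hstep, hbase]
    _ ≤ (2 * m + 1) ^ d + 10 ^ d * (m + 1) ^ (d - 1) := by
        rw [← mul_assoc]; gcongr; exact four_mul_mul_five_pow_le_ten_pow d

variable {E : Type*} [NormedAddCommGroup E] [NormedSpace ℝ E] [FiniteDimensional ℝ E]

theorem card_mul_pow_add_pow_le_of_pairwiseDisjoint_ball {ι : Type*} {S : Finset ι} {y : ι → E}
    {c : E} {ρ r R : ℝ} (hρ : 0 < ρ) (hr : 0 < r) (hrR : r ≤ R)
    (hdisj : (S : Set ι).PairwiseDisjoint fun j ↦ ball (y j) ρ)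
    (hsub : ∀ j ∈ S, ball (y j) ρ ⊆ ball c R \ ball c r) :
    #S * ρ ^ finrank ℝ E + r ^ finrank ℝ E ≤ R ^ finrank ℝ E := by
  borelize E
  set μ : Measure E := Measure.addHaar
  have hunion : μ (⋃ j ∈ S, ball (y j) ρ) + μ (ball c r) ≤ μ (ball c R) := by
    rw [← measure_union (Set.disjoint_iUnion₂_left.2 fun j hj ↦
      Set.disjoint_sdiff_left.mono_left (hsub j hj)) measurableSet_ball]
    exact measure_mono (Set.union_subset (Set.iUnion₂_subset fun j hj ↦
      (hsub j hj).trans Set.sdiff_subset) (ball_subset_ball hrR))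
  rw [measure_biUnion_finset hdisj fun _ _ ↦ measurableSet_ball,
    sum_congr rfl fun j _ ↦ μ.addHaar_ball_of_pos (y j) hρ, sum_const, nsmul_eq_mul,
    μ.addHaar_ball_of_pos c hr, μ.addHaar_ball_of_pos c (hr.trans_le hrR), ← mul_assoc,
    ← add_mul, ENNReal.mul_le_mul_iff_left (measure_ball_pos μ 0 one_pos).ne'
      measure_ball_lt_top.ne, ← ENNReal.ofReal_natCast, ← ENNReal.ofReal_mul (by positivity),
    ← ENNReal.ofReal_add (by positivity) (by positivity),
    ENNReal.ofReal_le_ofReal_iff (pow_nonneg (hr.le.trans hrR) _)] at hunion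
  exact hunion

theorem card_le_of_pairwise_le_dist_of_mem_Ico {ι : Type*} {S : Finset ι} {x : ι → E} {c : E}
    {δ : ℝ} (hδ : 0 < δ) (hsep : (S : Set ι).Pairwise fun j j' ↦ δ ≤ dist (x j) (x j')) (m : ℕ)
    (hS : ∀ j ∈ S, dist c (x j) ∈ Set.Ico ((m + 1) * δ) ((m + 2) * δ)) :
    #S ≤ 10 ^ finrank ℝ E * (m + 1) ^ (finrank ℝ E - 1) := by
  set d := finrank ℝ E
  have hsub : ∀ j ∈ S,
      ball (x j) (δ / 2) ⊆ ball c ((2 * m + 5) * (δ / 2)) \ ball c ((2 * m + 1) * (δ / 2)) := by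
    intro j hj y hy
    obtain ⟨hlo, hhi⟩ := hS j hj
    rw [mem_ball] at hy
    refine ⟨?_, ?_⟩
    · rw [mem_ball]
      linarith [dist_triangle y (x j) c, dist_comm c (x j)]
    · rw [mem_ball, not_lt]
      linarith [dist_triangle c y (x j), dist_comm y c]
  have hvol := card_mul_pow_add_pow_le_of_pairwiseDisjoint_ball (E := E) (by positivity)
    (by positivity) (by gcongr; norm_num)
    (fun j hj j' hj' hne ↦ ball_disjoint_ball (by linarith [hsep hj hj' hne])) hsub
  rw [mul_pow, mul_pow, ← add_mul] at hvol
  have hreal : (#S + (2 * m + 1) ^ d : ℝ) ≤ (2 * m + 5) ^ d :=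
    le_of_mul_le_mul_right hvol (by positivity)
  have hnat : #S + (2 * m + 1) ^ d ≤ (2 * m + 5) ^ d := by exact_mod_cast hreal
  linarith [two_mul_add_five_pow_le m d]

theorem mem_Ico_floor_div_sub_one {t δ : ℝ} (hδ : 0 < δ) (ht : δ ≤ t) :
    t ∈ Set.Ico (((⌊t / δ⌋₊ - 1 : ℕ) + 1 : ℝ) * δ) (((⌊t / δ⌋₊ - 1 : ℕ) + 2 : ℝ) * δ) := by
  have hfloor : 1 ≤ ⌊t / δ⌋₊ := Nat.le_floor (by simpa [one_le_div hδ] using ht)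
  have hcast : ((⌊t / δ⌋₊ - 1 : ℕ) + 1 : ℝ) = ⌊t / δ⌋₊ := by push_cast [hfloor]; ring
  rw [show ((⌊t / δ⌋₊ - 1 : ℕ) + 2 : ℝ) = ⌊t / δ⌋₊ + 1 by rw [← hcast]; ring, hcast]
  exact ⟨(le_div_iff₀ hδ).1 (Nat.floor_le (div_nonneg (hδ.le.trans ht) hδ.le)),
    (div_lt_iff₀ hδ).1 (Nat.lt_floor_add_one _)⟩

theorem sum_le_of_pairwise_le_dist {ι : Type*} [Fintype ι] {x : ι → E} {δ : ℝ} (hδ : 0 < δ)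
    (hsep : Pairwise fun j j' ↦ δ ≤ dist (x j) (x j')) {ψ : ℝ → ℝ≥0∞}
    (hψ : AntitoneOn ψ (Set.Ici 0)) (i : ι) :
    ∑ j, ψ (dist (x i) (x j)) ≤
      ψ 0 + 10 ^ finrank ℝ E *
        ∑' m : ℕ, ((m : ℝ≥0∞) + 1) ^ (finrank ℝ E - 1) * ψ (((m : ℝ) + 1) * δ) := by
  classical
  set d := finrank ℝ E
  set s := univ.erase i
  set shell : ι → ℕ := fun j ↦ ⌊dist (x i) (x j) / δ⌋₊ - 1
  have hfiber (m : ℕ) : ∑ j ∈ s with shell j = m, ψ (dist (x i) (x j)) ≤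
      10 ^ d * (((m : ℝ≥0∞) + 1) ^ (d - 1) * ψ (((m : ℝ) + 1) * δ)) := by
    have hT : ∀ j ∈ s.filter (shell · = m),
        dist (x i) (x j) ∈ Set.Ico ((m + 1) * δ) ((m + 2) * δ) := by
      intro j hj
      obtain ⟨hjs, rfl⟩ := mem_filter.1 hj
      exact mem_Ico_floor_div_sub_one hδ (hsep (ne_of_mem_erase hjs).symm)
    have hcard := card_le_of_pairwise_le_dist_of_mem_Ico hδ (fun j _ j' _ h ↦ hsep h) m hT
    calc ∑ j ∈ s with shell j = m, ψ (dist (x i) (x j))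
        ≤ #(s.filter (shell · = m)) * ψ (((m : ℝ) + 1) * δ) := by
          rw [← nsmul_eq_mul]
          exact sum_le_card_nsmul _ _ _ fun j hj ↦
            hψ (Set.mem_Ici.2 (by positivity)) (Set.mem_Ici.2 dist_nonneg) (hT j hj).1
      _ ≤ _ := by
          rw [← mul_assoc]
          gcongr
          exact_mod_cast hcard
  calc ∑ j, ψ (dist (x i) (x j)) = ψ 0 + ∑ j ∈ s, ψ (dist (x i) (x j)) := by
        rw [← add_sum_erase _ _ (mem_univ i), dist_self]
    _ = ψ 0 + ∑ m ∈ s.image shell, ∑ j ∈ s with shell j = m, ψ (dist (x i) (x j)) := by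
        rw [sum_fiberwise_of_maps_to fun j hj ↦ mem_image_of_mem shell hj]
    _ ≤ ψ 0 + ∑ m ∈ s.image shell,
          10 ^ d * (((m : ℝ≥0∞) + 1) ^ (d - 1) * ψ (((m : ℝ) + 1) * δ)) := by
        gcongr with m; exact hfiber m
    _ ≤ ψ 0 + ∑' m : ℕ, 10 ^ d * (((m : ℝ≥0∞) + 1) ^ (d - 1) * ψ (((m : ℝ) + 1) * δ)) := by
        gcongr; exact ENNReal.sum_le_tsum _
    _ = _ := by rw [ENNReal.tsum_mul_left]

theorem row_sum_bound_of_separated_general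
    (d : ℕ) (δ : ℝ) (hδ : 0 < δ)
    (ψ : ℝ → ℝ≥0∞) (hψ_mono : AntitoneOn ψ (Set.Ici 0))
    (N : ℕ) (x : Fin N → EuclideanSpace ℝ (Fin d))
    (hsep : ∀ i j, i ≠ j → δ ≤ ‖x i - x j‖) :
    ∀ i, ∑ j, ψ ‖x i - x j‖ ≤
      ψ 0 + 10 ^ d * ∑' m : ℕ, ((m : ℝ≥0∞) + 1) ^ (d - 1) * ψ (((m : ℝ) + 1) * δ) := by
  intro i
  have hsep' : Pairwise fun j j' ↦ δ ≤ dist (x j) (x j') := fun j j' hne ↦ by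
    simpa only [dist_eq_norm] using hsep j j' hne
  have h := sum_le_of_pairwise_le_dist hδ hsep' hψ_mono i
  rw [finrank_euclideanSpace_fin] at h
  simpa only [dist_eq_norm] using h

/-- For a nonincreasing `ψ : [0,∞) → [0,∞]` and a `δ`-separated family
`x₁, …, x_N` in `ℝ^d`, the row sum `∑_j ψ(‖x_i − x_j‖)` is bounded by
`ψ(0) + 10^d ∑_{m≥1} m^{d−1} ψ(mδ)`, where the right-hand side may be `+∞`. -/
theorem row_sum_bound_of_separated
    (d : ℕ) (hd : 1 ≤ d) (δ : ℝ) (hδ : 0 < δ)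
    (ψ : ℝ → ℝ≥0∞) (hψ_mono : AntitoneOn ψ (Set.Ici 0))
    (N : ℕ) (x : Fin N → EuclideanSpace ℝ (Fin d))
    (hsep : ∀ i j, i ≠ j → δ ≤ ‖x i - x j‖) :
    ∀ i, ∑ j, ψ ‖x i - x j‖ ≤
      ψ 0 + 10 ^ d * ∑' m : ℕ, ((m : ℝ≥0∞) + 1) ^ (d - 1) * ψ (((m : ℝ) + 1) * δ) :=
  row_sum_bound_of_separated_general d δ hδ ψ hψ_mono N x hsep
end

section
/- Let d ≥ 1 and m ≥ 1 be integers, δ > 0, and x₀ ∈ ℝ^d. Let P be a finite set of points contained in the annulus A = {x ∈ ℝ^d : mδ ≤ ‖x − x₀‖ < (m+1)δ} such that ‖p − p'‖ > δ for all distinct p, p' ∈ P. Then the cardinality of P is at most 10^d (m − 1/2)^{d−1}. -/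
open MeasureTheory Metric
open scoped ENNReal

private lemma pow_sub_pow_le_aux (a b : ℝ) (h0 : 0 ≤ a) (hab : a ≤ b) :
    ∀ n : ℕ, b ^ (n + 1) - a ^ (n + 1) ≤ (n + 1) * (b - a) * b ^ n := by
  intro n
  induction n with
  | zero => simp
  | succ n ih =>
    have hb : 0 ≤ b := h0.trans hab
    have hpow : a ^ (n + 1) ≤ b ^ (n + 1) := pow_le_pow_left₀ h0 hab _
    have h1 : b * (b ^ (n + 1) - a ^ (n + 1)) ≤ b * ((n + 1) * (b - a) * b ^ n) :=
      mul_le_mul_of_nonneg_left ih hb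
    have h2 : (b - a) * a ^ (n + 1) ≤ (b - a) * b ^ (n + 1) :=
      mul_le_mul_of_nonneg_left hpow (by linarith)
    have e1 : b ^ (n + 2) - a ^ (n + 2)
        = b * (b ^ (n + 1) - a ^ (n + 1)) + (b - a) * a ^ (n + 1) := by ring
    have e2 : b * ((n + 1 : ℝ) * (b - a) * b ^ n) = ((n : ℝ) + 1) * (b - a) * b ^ (n + 1) := by
      ring
    push_cast
    push_cast at h1
    nlinarith [pow_nonneg hb (n + 1)]

private lemma succ_le_two_pow' (n : ℕ) : (n : ℝ) + 1 ≤ 2 ^ n := by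
  induction n with
  | zero => norm_num
  | succ n ih =>
    have h0 : (0 : ℝ) ≤ (n : ℝ) := Nat.cast_nonneg n
    push_cast at ih ⊢
    rw [pow_succ]
    nlinarith

/-- Key elementary inequality for `a ≥ 3/2`. -/
private lemma elem_big (e : ℕ) (a : ℝ) (ha : 3 / 2 ≤ a) :
    2 ^ (e + 1) * ((a + 2) ^ (e + 1) - a ^ (e + 1)) ≤ 10 ^ (e + 1) * a ^ e := by
  have ha0 : (0 : ℝ) ≤ a := by linarith
  have hb0 : (0 : ℝ) ≤ a + 2 := by linarith
  have hmvt : (a + 2) ^ (e + 1) - a ^ (e + 1) ≤ ((e : ℝ) + 1) * 2 * (a + 2) ^ e := by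
    have h := pow_sub_pow_le_aux a (a + 2) ha0 (by linarith) e
    have : ((e : ℝ) + 1) * ((a + 2) - a) * (a + 2) ^ e = ((e : ℝ) + 1) * 2 * (a + 2) ^ e := by
      ring
    linarith [h, this.le]
  have hratio : a + 2 ≤ 7 / 3 * a := by linarith
  have hpow1 : (a + 2) ^ e ≤ (7 / 3 * a) ^ e := pow_le_pow_left₀ hb0 hratio e
  have htwod : ((e : ℝ) + 1) * 2 ≤ 2 ^ (e + 1) := by
    have := succ_le_two_pow' e
    rw [pow_succ]
    linarith
  calc (2 : ℝ) ^ (e + 1) * ((a + 2) ^ (e + 1) - a ^ (e + 1))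
      ≤ 2 ^ (e + 1) * (((e : ℝ) + 1) * 2 * (a + 2) ^ e) :=
        mul_le_mul_of_nonneg_left hmvt (by positivity)
    _ ≤ 2 ^ (e + 1) * (2 ^ (e + 1) * (7 / 3 * a) ^ e) := by
        apply mul_le_mul_of_nonneg_left _ (by positivity)
        exact mul_le_mul htwod hpow1 (by positivity) (by positivity)
    _ = 4 * (28 / 3) ^ e * a ^ e := by
        rw [pow_succ, mul_pow, show (28 : ℝ) / 3 = 2 * 2 * (7 / 3) by norm_num,
          mul_pow, mul_pow]
        ring
    _ ≤ 10 * 10 ^ e * a ^ e := by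
        have h1 : ((28 : ℝ) / 3) ^ e ≤ 10 ^ e :=
          pow_le_pow_left₀ (by norm_num) (by norm_num) e
        have h2 : (0 : ℝ) ≤ a ^ e := by positivity
        have hh : ((28 : ℝ) / 3) ^ e * a ^ e ≤ 10 ^ e * a ^ e :=
          mul_le_mul_of_nonneg_right h1 h2
        have h3 : (0 : ℝ) ≤ (10 : ℝ) ^ e * a ^ e := by positivity
        nlinarith
    _ = 10 ^ (e + 1) * a ^ e := by rw [pow_succ]; ring

/-- Elementary inequality: `2^d ((m+3/2)^d - (m-1/2)^d) ≤ 10^d (m-1/2)^(d-1)` for `m ≥ 1`. -/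
private lemma elementary_bound (d m : ℕ) (hd : 1 ≤ d) (hm : 1 ≤ m) :
    2 ^ d * (((m : ℝ) + 3 / 2) ^ d - ((m : ℝ) - 1 / 2) ^ d)
      ≤ 10 ^ d * ((m : ℝ) - 1 / 2) ^ (d - 1) := by
  obtain ⟨e, rfl⟩ : ∃ e, d = e + 1 := ⟨d - 1, (Nat.succ_pred_eq_of_pos hd).symm⟩
  simp only [Nat.add_sub_cancel]
  rcases eq_or_lt_of_le hm with hm1' | hm2
  · -- m = 1
    have hma : (m : ℝ) = 1 := by exact_mod_cast hm1'.symm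
    rw [hma]
    have e1 : (1 : ℝ) + 3 / 2 = 5 / 2 := by norm_num
    have e2 : (1 : ℝ) - 1 / 2 = 1 / 2 := by norm_num
    rw [e1, e2]
    have h2 : ((5 : ℝ) / 2) ^ (e + 1) - (1 / 2) ^ (e + 1) ≤ (5 / 2) ^ (e + 1) := by
      have : (0 : ℝ) ≤ (1 / 2 : ℝ) ^ (e + 1) := by positivity
      linarith
    calc (2 : ℝ) ^ (e + 1) * ((5 / 2) ^ (e + 1) - (1 / 2) ^ (e + 1))
        ≤ 2 ^ (e + 1) * (5 / 2) ^ (e + 1) :=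
          mul_le_mul_of_nonneg_left h2 (by positivity)
      _ = 5 ^ (e + 1) := by rw [← mul_pow]; norm_num
      _ ≤ 10 ^ (e + 1) * (1 / 2) ^ e := by
          have hpe : ((10 : ℝ)) ^ e * (1 / 2 : ℝ) ^ e = 5 ^ e := by
            rw [← mul_pow]; norm_num
          have h : (10 : ℝ) ^ (e + 1) * (1 / 2) ^ e = 2 * 5 ^ (e + 1) := by
            calc (10 : ℝ) ^ (e + 1) * (1 / 2) ^ e
                = 10 * (10 ^ e * (1 / 2) ^ e) := by rw [pow_succ]; ring
              _ = 10 * 5 ^ e := by rw [hpe]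
              _ = 2 * 5 ^ (e + 1) := by rw [pow_succ]; ring
          rw [h]
          have h5 : (0 : ℝ) ≤ (5 : ℝ) ^ (e + 1) := by positivity
          linarith
  · -- m ≥ 2
    have hm2' : (2 : ℝ) ≤ (m : ℝ) := by exact_mod_cast hm2
    have ha32 : (3 : ℝ) / 2 ≤ (m : ℝ) - 1 / 2 := by linarith
    have hb' : ((m : ℝ) + 3 / 2) = ((m : ℝ) - 1 / 2) + 2 := by ring
    rw [hb']
    exact elem_big e ((m : ℝ) - 1 / 2) ha32

/-- An external `δ`-packing of the annulus of inner radius `mδ` and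
outer radius `(m+1)δ` in `ℝ^d` (with `m ≥ 1`) has at most `10^d (m − 1/2)^{d−1}` points. -/
theorem annulus_packing_bound
    (d m : ℕ) (hd : 1 ≤ d) (hm : 1 ≤ m) (δ : ℝ) (hδ : 0 < δ)
    (x₀ : EuclideanSpace ℝ (Fin d)) (P : Finset (EuclideanSpace ℝ (Fin d)))
    (hP : ∀ p ∈ P, (m : ℝ) * δ ≤ ‖p - x₀‖ ∧ ‖p - x₀‖ < ((m : ℝ) + 1) * δ)
    (hsep : ∀ p ∈ P, ∀ p' ∈ P, p ≠ p' → δ < ‖p - p'‖) :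
    (P.card : ℝ) ≤ 10 ^ d * ((m : ℝ) - 1 / 2) ^ (d - 1) := by
  classical
  haveI : Nonempty (Fin d) := ⟨⟨0, hd⟩⟩
  haveI : Nontrivial (EuclideanSpace ℝ (Fin d)) := inferInstance
  have hm1 : (1 : ℝ) ≤ (m : ℝ) := by exact_mod_cast hm
  set r : ℝ := ((m : ℝ) - 1 / 2) * δ with hr
  set R : ℝ := ((m : ℝ) + 3 / 2) * δ with hR
  have hrpos : 0 < r := by apply mul_pos _ hδ; linarith
  have hRpos : 0 < R := by apply mul_pos _ hδ; linarith
  have hrR : r ≤ R := by apply mul_le_mul_of_nonneg_right _ hδ.le; linarith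
  -- balls around points of P are contained in the enlarged annulus
  have hsubset : ∀ p ∈ P, ball p (δ / 2) ⊆ ball x₀ R \ ball x₀ r := by
    intro p hp x hx
    rw [mem_ball] at hx
    obtain ⟨h1, h2⟩ := hP p hp
    rw [show ‖p - x₀‖ = dist p x₀ from (dist_eq_norm p x₀).symm] at h1 h2
    constructor
    · rw [mem_ball]
      calc dist x x₀ ≤ dist x p + dist p x₀ := dist_triangle _ _ _
        _ < δ / 2 + ((m : ℝ) + 1) * δ := by linarith
        _ = R := by rw [hR]; ring
    · intro hmem
      rw [mem_ball] at hmem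
      have h3 : dist p x₀ ≤ dist p x + dist x x₀ := dist_triangle _ _ _
      rw [dist_comm p x] at h3
      have h4 : (m : ℝ) * δ < δ / 2 + r := by linarith
      rw [hr] at h4
      linarith
  -- balls are pairwise disjoint
  have hdisj : (↑P : Set (EuclideanSpace ℝ (Fin d))).PairwiseDisjoint
      (fun p => ball p (δ / 2)) := by
    intro p hp q hq hpq
    apply Set.disjoint_left.mpr
    intro x hxp hxq
    simp only [mem_ball] at hxp hxq
    have hsep' := hsep p (by exact_mod_cast hp) q (by exact_mod_cast hq) hpq
    rw [show ‖p - q‖ = dist p q from (dist_eq_norm p q).symm] at hsep'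
    have h3 : dist p q ≤ dist p x + dist x q := dist_triangle _ _ _
    rw [dist_comm p x] at h3
    linarith
  -- volume computation
  have hfr : Module.finrank ℝ (EuclideanSpace ℝ (Fin d)) = d := finrank_euclideanSpace_fin
  set c : ℝ≥0∞ := volume (ball (0 : EuclideanSpace ℝ (Fin d)) 1) with hc
  have hvol_small : ∀ p : EuclideanSpace ℝ (Fin d),
      volume (ball p (δ / 2)) = ENNReal.ofReal ((δ / 2) ^ d) * c := by
    intro p
    rw [hc, Measure.addHaar_ball volume p (by positivity : (0:ℝ) ≤ δ / 2), hfr]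
  have hsum : ∑ p ∈ P, volume (ball p (δ / 2)) = volume (⋃ p ∈ P, ball p (δ / 2)) :=
    (measure_biUnion_finset hdisj fun _ _ => measurableSet_ball).symm
  have hmeas_le : volume (⋃ p ∈ P, ball p (δ / 2)) ≤ volume (ball x₀ R \ ball x₀ r) :=
    measure_mono (Set.iUnion₂_subset hsubset)
  have hdiff : volume (ball x₀ R \ ball x₀ r) = volume (ball x₀ R) - volume (ball x₀ r) :=
    measure_diff (ball_subset_ball hrR) measurableSet_ball.nullMeasurableSet
      measure_ball_lt_top.ne
  have hvolR : volume (ball x₀ R) = ENNReal.ofReal (R ^ d) * c := by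
    rw [hc, Measure.addHaar_ball volume x₀ hRpos.le, hfr]
  have hvolr : volume (ball x₀ r) = ENNReal.ofReal (r ^ d) * c := by
    rw [hc, Measure.addHaar_ball volume x₀ hrpos.le, hfr]
  have hc0 : c ≠ 0 := (measure_ball_pos volume 0 one_pos).ne'
  have hctop : c ≠ ⊤ := measure_ball_lt_top.ne
  -- combine into an ENNReal inequality
  have key : (P.card : ℝ≥0∞) * ENNReal.ofReal ((δ / 2) ^ d) * c
      ≤ ENNReal.ofReal (R ^ d - r ^ d) * c := by
    have lhs_eq : ∑ p ∈ P, volume (ball p (δ / 2))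
        = (P.card : ℝ≥0∞) * ENNReal.ofReal ((δ / 2) ^ d) * c := by
      rw [Finset.sum_congr rfl (fun p _ => hvol_small p), Finset.sum_const, nsmul_eq_mul,
        mul_assoc]
    have rhs_eq : volume (ball x₀ R) - volume (ball x₀ r)
        = ENNReal.ofReal (R ^ d - r ^ d) * c := by
      rw [hvolR, hvolr, ← ENNReal.sub_mul (fun _ _ => hctop),
        ← ENNReal.ofReal_sub _ (by positivity)]
    rw [← lhs_eq, ← rhs_eq, ← hdiff, hsum]
    exact hmeas_le
  have key2 : (P.card : ℝ≥0∞) * ENNReal.ofReal ((δ / 2) ^ d)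
      ≤ ENNReal.ofReal (R ^ d - r ^ d) :=
    (ENNReal.mul_le_mul_iff_left hc0 hctop).mp key
  -- convert to a real inequality
  have key3 : (P.card : ℝ) * (δ / 2) ^ d ≤ R ^ d - r ^ d := by
    have h1 : (P.card : ℝ≥0∞) * ENNReal.ofReal ((δ / 2) ^ d)
        = ENNReal.ofReal ((P.card : ℝ) * (δ / 2) ^ d) := by
      rw [ENNReal.ofReal_mul (by positivity), ENNReal.ofReal_natCast]
    rw [h1] at key2
    refine (ENNReal.ofReal_le_ofReal_iff ?_).mp key2
    have : r ^ d ≤ R ^ d := pow_le_pow_left₀ hrpos.le hrR d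
    linarith
  -- divide by (δ/2)^d
  have key4 : (P.card : ℝ) ≤ 2 ^ d * (((m : ℝ) + 3 / 2) ^ d - ((m : ℝ) - 1 / 2) ^ d) := by
    have hδ2 : (0 : ℝ) < (δ / 2) ^ d := by positivity
    refine le_of_mul_le_mul_right ?_ hδ2
    calc (P.card : ℝ) * (δ / 2) ^ d ≤ R ^ d - r ^ d := key3
      _ = 2 ^ d * (((m : ℝ) + 3 / 2) ^ d - ((m : ℝ) - 1 / 2) ^ d) * (δ / 2) ^ d := by
          rw [hR, hr, mul_pow, mul_pow, div_pow]
          field_simp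
  calc (P.card : ℝ) ≤ 2 ^ d * (((m : ℝ) + 3 / 2) ^ d - ((m : ℝ) - 1 / 2) ^ d) := key4
    _ ≤ 10 ^ d * ((m : ℝ) - 1 / 2) ^ (d - 1) := elementary_bound d m hd hm
end

section
/- Let k : ℝ^d × ℝ^d → ℝ be a symmetric kernel that is Lipschitz continuous in each argument, i.e. there exists L > 0 with |k(x,y) − k(x',y)| ≤ L‖x − x'‖ for all x, x', y. Let (z_m)_{m=1}^∞ be a sequence of points in ℝ^d, and for each M let K^{(M)} be the M×M matrix with entries k(z_i, z_j) for 1 ≤ i, j ≤ M; assume each K^{(M)} is symmetric positive definite. If there exists C > 0 such that cond(K^{(M)}) ≤ C for all M, then the sequence (z_m) satisfies minimum separation: there exists δ > 0 such that ‖z_i − z_j‖ ≥ δ for all i ≠ j. -/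
/-!
Rayleigh quotients of a symmetric matrix lie between its extreme eigenvalues. Testing `K^{(M)}`
with a basis vector gives `k(z₀, z₀) ≤ λ_max`, and testing it with `e_i - e_j` gives
`2 λ_min ≤ k(z_i,z_i) + k(z_j,z_j) - k(z_i,z_j) - k(z_j,z_i) ≤ 2 L ‖z_i - z_j‖` by the
Lipschitz bound. With `λ_max ≤ C λ_min` this yields `k(z₀, z₀) ≤ C L ‖z_i - z_j‖`, and
`k(z₀, z₀) > 0` by positive definiteness.
-/

namespace Matrix.IsHermitian

variable {n : Type*} [Fintype n] [DecidableEq n] {A : Matrix n n ℝ} (hA : A.IsHermitian)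

lemma dotProduct_mulVec_eq_sum_eigenvalues (v : n → ℝ) :
    v ⬝ᵥ (A *ᵥ v) =
      ∑ t, hA.eigenvalues t * ((star (hA.eigenvectorUnitary : Matrix n n ℝ) *ᵥ v) t) ^ 2 := by
  have hvU : v ᵥ* (hA.eigenvectorUnitary : Matrix n n ℝ) =
      star (hA.eigenvectorUnitary : Matrix n n ℝ) *ᵥ v := by
    rw [star_eq_conjTranspose, conjTranspose_eq_transpose_of_trivial, mulVec_transpose]
  conv_lhs => rw [hA.spectral_theorem, Unitary.conjStarAlgAut_apply]
  rw [← mulVec_mulVec, ← mulVec_mulVec, dotProduct_mulVec, hvU]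
  simp only [mulVec_diagonal, dotProduct, Function.comp_apply, RCLike.ofReal_real_eq_id, id_eq]
  exact Finset.sum_congr rfl fun t _ => by ring

lemma dotProduct_self_eq_sum_sq (v : n → ℝ) :
    v ⬝ᵥ v = ∑ t, ((star (hA.eigenvectorUnitary : Matrix n n ℝ) *ᵥ v) t) ^ 2 := by
  set U : Matrix n n ℝ := (hA.eigenvectorUnitary : Matrix n n ℝ)
  have hvU : v ᵥ* U = star U *ᵥ v := by
    rw [star_eq_conjTranspose, conjTranspose_eq_transpose_of_trivial, mulVec_transpose]
  have hUU : U *ᵥ (star U *ᵥ v) = v := by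
    rw [mulVec_mulVec, show U * star U = 1 from Unitary.coe_mul_star_self _, one_mulVec]
  nth_rw 2 [← hUU]
  rw [dotProduct_mulVec, hvU]
  simp only [dotProduct, sq]

lemma iInf_eigenvalues_mul_dotProduct_self_le (v : n → ℝ) :
    (⨅ t, hA.eigenvalues t) * (v ⬝ᵥ v) ≤ v ⬝ᵥ (A *ᵥ v) := by
  rw [hA.dotProduct_self_eq_sum_sq, hA.dotProduct_mulVec_eq_sum_eigenvalues, Finset.mul_sum]
  gcongr with t
  exact ciInf_le (Set.finite_range _).bddBelow t

lemma dotProduct_mulVec_le_iSup_eigenvalues_mul (v : n → ℝ) :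
    v ⬝ᵥ (A *ᵥ v) ≤ (⨆ t, hA.eigenvalues t) * (v ⬝ᵥ v) := by
  rw [hA.dotProduct_self_eq_sum_sq, hA.dotProduct_mulVec_eq_sum_eigenvalues, Finset.mul_sum]
  gcongr with t
  exact le_ciSup (Set.finite_range _).bddAbove t

lemma diag_le_iSup_eigenvalues (i : n) : A i i ≤ ⨆ t, hA.eigenvalues t := by
  simpa [single_dotProduct] using hA.dotProduct_mulVec_le_iSup_eigenvalues_mul (Pi.single i 1)

lemma two_mul_iInf_eigenvalues_le {i j : n} (hij : i ≠ j) :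
    2 * ⨅ t, hA.eigenvalues t ≤ A i i + A j j - A i j - A j i := by
  have := hA.iInf_eigenvalues_mul_dotProduct_self_le (Pi.single i 1 - Pi.single j 1)
  simp only [dotProduct_sub, sub_dotProduct, dotProduct_single, single_dotProduct, mulVec_sub,
    mulVec_single, Pi.sub_apply, Pi.single_eq_same, Pi.single_eq_of_ne hij,
    Pi.single_eq_of_ne hij.symm, col_apply, MulOpposite.op_one, one_smul, mul_one, one_mul,
    sub_zero, zero_sub, sub_neg_eq_add] at this
  linarith

end Matrix.IsHermitian

namespace Matrix.PosDef

variable {n : Type*} [Fintype n] [DecidableEq n] [Nonempty n] {A : Matrix n n ℝ}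

lemma iInf_eigenvalues_pos (hA : A.PosDef) : 0 < ⨅ t, hA.1.eigenvalues t := by
  obtain ⟨t, ht⟩ := exists_eq_ciInf_of_finite (f := hA.1.eigenvalues)
  exact ht ▸ hA.eigenvalues_pos t

lemma one_le_iSup_div_iInf_eigenvalues (hA : A.PosDef) :
    1 ≤ (⨆ t, hA.1.eigenvalues t) / (⨅ t, hA.1.eigenvalues t) := by
  rw [one_le_div hA.iInf_eigenvalues_pos]
  exact ciInf_le_ciSup (Set.finite_range _).bddBelow (Set.finite_range _).bddAbove

lemma iSup_eigenvalues_le_mul_iInf (hA : A.PosDef) {C : ℝ}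
    (hcond : (⨆ t, hA.1.eigenvalues t) / (⨅ t, hA.1.eigenvalues t) ≤ C) :
    ⨆ t, hA.1.eigenvalues t ≤ C * ⨅ t, hA.1.eigenvalues t :=
  (div_le_iff₀ hA.iInf_eigenvalues_pos).1 hcond

end Matrix.PosDef

lemma add_sub_sub_le_of_lipschitz_left {E : Type*} [SeminormedAddCommGroup E] {k : E → E → ℝ}
    {L : ℝ} (hk_lip : ∀ x x' y, |k x y - k x' y| ≤ L * ‖x - x'‖) (x y : E) :
    k x x + k y y - k x y - k y x ≤ 2 * L * ‖x - y‖ := by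
  have hx := le_of_abs_le (hk_lip x y x)
  have hy := le_of_abs_le (hk_lip y x y)
  rw [norm_sub_rev] at hy
  linarith

lemma exists_pos_le_norm_sub_of_le_mul {ι E : Type*} [Nontrivial ι] [SeminormedAddCommGroup E]
    {z : ι → E} {a c : ℝ} (ha : 0 < a) (h : ∀ i j, i ≠ j → a ≤ c * ‖z i - z j‖) :
    ∃ δ > 0, ∀ i j, i ≠ j → δ ≤ ‖z i - z j‖ := by
  obtain ⟨i, j, hij⟩ := exists_pair_ne ι
  have hc : 0 < c := pos_of_mul_pos_left (ha.trans_le (h i j hij)) (norm_nonneg _)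
  exact ⟨a / c, div_pos ha hc, fun i j hij => (div_le_iff₀' hc).2 (h i j hij)⟩

theorem separation_necessary_for_bounded_condition_general
    (d : ℕ) (k : EuclideanSpace ℝ (Fin d) → EuclideanSpace ℝ (Fin d) → ℝ)
    (L : ℝ)
    (hk_lip : ∀ x x' y, |k x y - k x' y| ≤ L * ‖x - x'‖)
    (z : ℕ → EuclideanSpace ℝ (Fin d))
    (K : (M : ℕ) → Matrix (Fin M) (Fin M) ℝ)
    (hKdef : ∀ (M : ℕ) (i j : Fin M), K M i j = k (z i) (z j))
    (hKpd : ∀ M, (K M).PosDef)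
    (hKherm : ∀ M, (K M).IsHermitian)
    (C : ℝ)
    (hcond : ∀ M, 0 < M →
      (⨆ i, (hKherm M).eigenvalues i) / (⨅ i, (hKherm M).eigenvalues i) ≤ C) :
    ∃ δ > 0, ∀ i j : ℕ, i ≠ j → δ ≤ ‖z i - z j‖ := by
  have hC : 0 ≤ C := zero_le_one.trans <|
    (hKpd 1).one_le_iSup_div_iInf_eigenvalues.trans (hcond 1 one_pos)
  have hk0 : 0 < k (z 0) (z 0) := by simpa [hKdef] using (hKpd 1).diag_pos (i := 0)
  refine exists_pos_le_norm_sub_of_le_mul (c := C * L) hk0 fun i j hij => ?_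
  set M := max i j + 1
  have hi : i < M := by omega
  have hj : j < M := by omega
  have hform := (hKherm M).two_mul_iInf_eigenvalues_le (i := ⟨i, hi⟩) (j := ⟨j, hj⟩)
    (by simpa [Fin.ext_iff] using hij)
  simp only [hKdef] at hform
  have hk := add_sub_sub_le_of_lipschitz_left hk_lip (z i) (z j)
  calc k (z 0) (z 0) = K M ⟨0, by omega⟩ ⟨0, by omega⟩ := (hKdef M ⟨0, _⟩ ⟨0, _⟩).symm
    _ ≤ ⨆ t, (hKherm M).eigenvalues t := (hKherm M).diag_le_iSup_eigenvalues _
    _ ≤ C * ⨅ t, (hKherm M).eigenvalues t :=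
      (hKpd M).iSup_eigenvalues_le_mul_iInf (hcond M (by omega))
    _ ≤ C * (L * ‖z i - z j‖) := by gcongr; linarith
    _ = C * L * ‖z i - z j‖ := by ring

/-- If `k` is a symmetric, Lipschitz (in each argument) kernel on `ℝ^d`,
`(z_m)` a sequence of points whose kernel matrices `K^{(M)} = (k(z_i, z_j))_{i,j < M}` are all
positive definite with uniformly bounded condition number, then the sequence `(z_m)`
satisfies minimum separation. -/
theorem separation_necessary_for_bounded_condition
    (d : ℕ) (k : EuclideanSpace ℝ (Fin d) → EuclideanSpace ℝ (Fin d) → ℝ)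
    (L : ℝ) (hL : 0 < L)
    (hk_symm : ∀ x y, k x y = k y x)
    (hk_lip : ∀ x x' y, |k x y - k x' y| ≤ L * ‖x - x'‖)
    (z : ℕ → EuclideanSpace ℝ (Fin d))
    (K : (M : ℕ) → Matrix (Fin M) (Fin M) ℝ)
    (hKdef : ∀ (M : ℕ) (i j : Fin M), K M i j = k (z i) (z j))
    (hKpd : ∀ M, (K M).PosDef)
    (hKherm : ∀ M, (K M).IsHermitian)
    (C : ℝ) (hC : 0 < C)
    (hcond : ∀ M, 0 < M →
      (⨆ i, (hKherm M).eigenvalues i) / (⨅ i, (hKherm M).eigenvalues i) ≤ C) :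
    ∃ δ > 0, ∀ i j : ℕ, i ≠ j → δ ≤ ‖z i - z j‖ :=
  separation_necessary_for_bounded_condition_general d k L hk_lip z K hKdef hKpd hKherm C hcond
end
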